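/- arXiv:0802.0889 — 3 statements merged into one kernel-verified Lean document; each statement's English description precedes it below -/
import Mathlib

section
/- In SL_3(ℝ), with y_1(a) = I + a·E_{21} and y_2(a) = I + a·E_{32} (elementary lower-triangular matrices), for all real a, b, c with a + c ≠ 0 one has y_1(a) y_2(b) y_1(c) = y_2(bc/(a+c)) y_1(a+c) y_2(ab/(a+c)). -/
/-- `y₁ a = I + a·E₂₁` in `SL₃(ℝ)` (as a 3×3 matrix; it has determinant 1). -/
noncomputable def y1 (a : ℝ) : Matrix (Fin 3) (Fin 3) ℝ :=
  1 + a • Matrix.single 1 0 1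

/-- `y₂ a = I + a·E₃₂` in `SL₃(ℝ)`. -/
noncomputable def y2 (a : ℝ) : Matrix (Fin 3) (Fin 3) ℝ :=
  1 + a • Matrix.single 2 1 1

/-! Both sides are lower unitriangular, and such matrices multiply like the Heisenberg group:
both sides have subdiagonal `(a + c, b)` and corner entry `b c`, because
`b c / (a + c) + a b / (a + c) = b` and `(b c / (a + c)) (a + c) = b c`. -/

def lowerUnitri {R : Type*} [Ring R] (x y z : R) : Matrix (Fin 3) (Fin 3) R :=
  !![1, 0, 0; x, 1, 0; z, y, 1]

theorem lowerUnitri_mul {R : Type*} [Ring R] (x y z x' y' z' : R) :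
    lowerUnitri x y z * lowerUnitri x' y' z' =
      lowerUnitri (x + x') (y + y') (z + y * x' + z') := by
  simp [lowerUnitri, add_assoc]

theorem y1_eq_lowerUnitri (a : ℝ) : y1 a = lowerUnitri a 0 0 := by
  ext i j
  fin_cases i <;> fin_cases j <;> simp [y1, lowerUnitri]

theorem y2_eq_lowerUnitri (b : ℝ) : y2 b = lowerUnitri 0 b 0 := by
  ext i j
  fin_cases i <;> fin_cases j <;> simp [y2, lowerUnitri]

theorem braid_move_yyy (a b c : ℝ) (h : a + c ≠ 0) :
    y1 a * y2 b * y1 c =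
      y2 (b * c / (a + c)) * y1 (a + c) * y2 (a * b / (a + c)) := by
  simp only [y1_eq_lowerUnitri, y2_eq_lowerUnitri, lowerUnitri_mul]
  have hsum : b * c / (a + c) + a * b / (a + c) = b := by field_simp; ring
  have hcorner : b * c / (a + c) * (a + c) = b * c := div_mul_cancel₀ _ h
  congr 1 <;> simp [hsum, hcorner]
end

section
/- For any real a > 0 and any i with 1 ≤ i ≤ n-1, every minor of the n×n matrix y_i(a) = I + a·E_{i+1,i} is nonnegative. Consequently, for any sequence i_1,...,i_m and positive reals t_1,...,t_m, all minors of the product y_{i_1}(t_1) ⋯ y_{i_m}(t_m) are nonnegative. -/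
/-- A square real matrix is totally nonnegative if all of its minors (of all sizes)
are nonnegative. -/
def TotallyNonneg {n : ℕ} (A : Matrix (Fin n) (Fin n) ℝ) : Prop :=
  ∀ (k : ℕ) (r c : Fin k → Fin n), StrictMono r → StrictMono c →
    0 ≤ (A.submatrix r c).det

/-- The `n×n` real matrix unit `E r c` (indices `0`-based). -/
def matUnit (n r c : ℕ) : Matrix (Fin n) (Fin n) ℝ :=
  Matrix.of fun p q => if p.val = r ∧ q.val = c then (1 : ℝ) else 0

/-- `y_i a = I + a·E_{i+1,i}` (indices `0`-based). -/
noncomputable def yElem (n i : ℕ) (a : ℝ) : Matrix (Fin n) (Fin n) ℝ :=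
  1 + a • matUnit n (i + 1) i

/-!
Total nonnegativity is closed under products by the Cauchy–Binet formula, and the identity is
totally nonnegative because its minors with monotone row and strictly monotone column selections
are `0` or `1`. The matrix `y_i(a)` is the identity with row `i + 1` replaced by `e_{i+1} + a e_i`,
so by linearity of the determinant in that row each of its minors is a minor of the identity plus
`a` times another one, obtained by moving the selected row `i + 1` down to its predecessor `i`;
the row selection stays monotone, so both minors are nonnegative.
-/

open Finset Function Matrix

theorem Equiv.Perm.eq_one_of_strictMono_comp {k : ℕ} {α : Type*} [Preorder α] {f : Fin k → α}
    {σ : Equiv.Perm (Fin k)} (hf : Monotone f) (hfσ : StrictMono (f ∘ σ)) : σ = 1 :=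
  σ.monotone_iff.1 (StrictMono.monotone fun _ _ hij => hf.reflect_lt (hfσ hij))

section CauchyBinet

variable {R m : Type*} [CommRing R] [Fintype m] {k : ℕ}

theorem Matrix.det_mul_eq_sum_prod_mul_det_submatrix (A : Matrix (Fin k) m R)
    (B : Matrix m (Fin k) R) :
    (A * B).det = ∑ p : Fin k → m, (∏ j, B (p j) j) * (A.submatrix id p).det := by
  simp only [det_apply', mul_apply, prod_univ_sum, mul_sum, Fintype.piFinset_univ]
  rw [sum_comm]
  refine sum_congr rfl fun p _ => sum_congr rfl fun σ _ => ?_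
  simp only [submatrix_apply, id, prod_mul_distrib]
  ring

variable [LinearOrder m]

theorem Finset.sum_injective_eq_sum_strictMono_sum_perm {M : Type*} [AddCommMonoid M]
    (f : (Fin k → m) → M) :
    ∑ p with Injective p, f p =
      ∑ s with StrictMono s, ∑ σ : Equiv.Perm (Fin k), f (s ∘ σ) := by
  rw [← sum_product']
  symm
  refine sum_nbij (fun x => x.1 ∘ x.2) ?_ ?_ ?_ fun _ _ => rfl
  · simp only [mem_product, mem_filter, mem_univ, true_and, and_true]
    exact fun x hx => hx.injective.comp x.2.injective
  · rintro ⟨s, σ⟩ hs ⟨s', σ'⟩ hs' h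
    simp only [coe_product, coe_filter, mem_univ, true_and, Set.mem_prod, Set.mem_ofPred_eq,
      coe_univ, Set.mem_univ, and_true] at hs hs' h
    have hτ : σ * σ'⁻¹ = 1 := by
      refine Equiv.Perm.eq_one_of_strictMono_comp hs.monotone ?_
      convert hs' using 1
      ext j
      simpa using congrFun h (σ'⁻¹ j)
    obtain rfl : σ = σ' := mul_inv_eq_one.1 hτ
    simp only [Prod.mk.injEq, and_true]
    exact funext fun j => by simpa using congrFun h (σ⁻¹ j)
  · intro p hp
    simp only [coe_filter, mem_univ, true_and, Set.mem_ofPred_eq] at hp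
    refine ⟨(p ∘ Tuple.sort p, (Tuple.sort p)⁻¹), ?_, ?_⟩
    · simp only [coe_product, coe_filter, mem_univ, true_and, Set.mem_prod, Set.mem_ofPred_eq,
        coe_univ, Set.mem_univ, and_true]
      exact (Tuple.monotone_sort p).strictMono_of_injective (hp.comp (Tuple.sort p).injective)
    · ext j
      simp

/-- **Cauchy–Binet formula**. -/
theorem Matrix.det_mul_eq_sum_strictMono (A : Matrix (Fin k) m R) (B : Matrix m (Fin k) R) :
    (A * B).det = ∑ s with StrictMono s, (A.submatrix id s).det * (B.submatrix s id).det := by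
  rw [det_mul_eq_sum_prod_mul_det_submatrix, ← sum_filter_of_ne (p := Injective),
    sum_injective_eq_sum_strictMono_sum_perm]
  · refine sum_congr rfl fun s _ => ?_
    have hperm (σ : Equiv.Perm (Fin k)) :
        (A.submatrix id (s ∘ σ)).det = Equiv.Perm.sign σ * (A.submatrix id s).det := by
      rw [← det_permute']
      rfl
    rw [det_apply' (B.submatrix s id), mul_sum]
    refine sum_congr rfl fun σ _ => ?_
    rw [hperm]
    change (∏ j, B (s (σ j)) j) * _ = _ * (_ * ∏ j, B (s (σ j)) j)
    ring
  · intro p _ hp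
    contrapose! hp
    obtain ⟨i, j, hij, hne⟩ : ∃ i j, p i = p j ∧ i ≠ j := by
      simpa [Injective] using hp
    rw [det_zero_of_column_eq hne fun l => by simp [hij], mul_zero]

end CauchyBinet

section Submatrix

variable {l m n o α : Type*}

theorem Matrix.submatrix_updateRow_of_injective [DecidableEq l] [DecidableEq m]
    (A : Matrix m n α) {r : l → m} (hr : Injective r) (c : o → n) {j : l} {p : m}
    (hj : r j = p) (v : n → α) :
    (A.updateRow p v).submatrix r c = (A.submatrix r c).updateRow j (v ∘ c) := by
  ext a b
  rcases eq_or_ne a j with rfl | ha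
  · simp [hj]
  · simp [ha, hr.ne_iff' hj]

theorem Matrix.submatrix_updateRow_of_notMem_range [DecidableEq m] (A : Matrix m n α)
    {r : l → m} (c : o → n) {p : m} (hp : ∀ j, r j ≠ p) (v : n → α) :
    (A.updateRow p v).submatrix r c = A.submatrix r c := by
  ext a b
  simp [hp a]

theorem Matrix.submatrix_update_left [DecidableEq l] (A : Matrix m n α) (r : l → m) (c : o → n)
    (j : l) (q : m) :
    A.submatrix (update r j q) c = (A.submatrix r c).updateRow j (A q ∘ c) := by
  ext a b
  rcases eq_or_ne a j with rfl | ha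
  · simp
  · simp [ha]

end Submatrix

theorem Matrix.det_one_submatrix_of_monotone {R m : Type*} [CommRing R] [DecidableEq m]
    [Preorder m] {k : ℕ} {r c : Fin k → m} (hr : Monotone r) (hc : StrictMono c) :
    ((1 : Matrix m m R).submatrix r c).det = if r = c then 1 else 0 := by
  rw [det_apply', sum_eq_single 1]
  · simp [one_apply, prod_boole, funext_iff]
  · intro σ _ hσ
    obtain ⟨j, hj⟩ : ∃ j, r (σ j) ≠ c j := by
      by_contra! h
      exact hσ (Equiv.Perm.eq_one_of_strictMono_comp hr (by convert hc; exact funext h))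
    rw [prod_eq_zero (mem_univ j), mul_zero]
    exact one_apply_ne hj
  · simp

theorem Matrix.det_one_submatrix_nonneg {R m : Type*} [CommRing R] [PartialOrder R]
    [ZeroLEOneClass R] [DecidableEq m] [Preorder m] {k : ℕ} {r c : Fin k → m} (hr : Monotone r)
    (hc : StrictMono c) : 0 ≤ ((1 : Matrix m m R).submatrix r c).det := by
  rw [det_one_submatrix_of_monotone hr hc]
  split_ifs
  exacts [zero_le_one, le_rfl]

theorem Matrix.det_submatrix_updateRow_add_smul {R l m : Type*} [CommRing R] [Fintype l]
    [DecidableEq l] [DecidableEq m] (M : Matrix m m R) (q : m) (a : R) {r : l → m}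
    (hr : Injective r) (c : l → m) (j : l) :
    ((M.updateRow (r j) (M (r j) + a • M q)).submatrix r c).det =
      (M.submatrix r c).det + a * (M.submatrix (update r j q) c).det := by
  have hrow : (M (r j) + a • M q) ∘ c = M.submatrix r c j + a • (M q ∘ c) := rfl
  rw [submatrix_updateRow_of_injective M hr c rfl, submatrix_update_left, hrow,
    det_updateRow_add, updateRow_eq_self, det_updateRow_smul]

theorem StrictMono.monotone_update_of_covBy {α β : Type*} [LinearOrder α] [DecidableEq α]
    [LinearOrder β] {f : α → β} (hf : StrictMono f) {a : α} {b : β} (hb : b ⋖ f a) :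
    Monotone (update f a b) := by
  intro x y hxy
  by_cases hx : x = a <;> by_cases hy : y = a
  · rw [hx, hy]
  · rw [hx, update_self, update_of_ne hy]
    exact hb.le.trans (hf.monotone (hx ▸ hxy))
  · rw [hy, update_self, update_of_ne hx]
    exact hb.le_of_lt (hf (lt_of_le_of_ne (hy ▸ hxy) hx))
  · rw [update_of_ne hx, update_of_ne hy]
    exact hf.monotone hxy

theorem TotallyNonneg.one {n : ℕ} : TotallyNonneg (1 : Matrix (Fin n) (Fin n) ℝ) :=
  fun _ _ _ hr hc => det_one_submatrix_nonneg hr.monotone hc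

theorem TotallyNonneg.mul {n : ℕ} {A B : Matrix (Fin n) (Fin n) ℝ} (hA : TotallyNonneg A)
    (hB : TotallyNonneg B) : TotallyNonneg (A * B) := by
  intro k r c hr hc
  rw [submatrix_mul A B r id c bijective_id, det_mul_eq_sum_strictMono]
  exact sum_nonneg fun s hs => mul_nonneg (hA k r s hr (mem_filter.1 hs).2)
    (hB k s c (mem_filter.1 hs).2 hc)

theorem yElem_eq_updateRow {n i : ℕ} (hi : i + 1 < n) (a : ℝ) :
    yElem n i a = (1 : Matrix (Fin n) (Fin n) ℝ).updateRow ⟨i + 1, hi⟩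
      ((1 : Matrix (Fin n) (Fin n) ℝ) ⟨i + 1, hi⟩ +
        a • (1 : Matrix (Fin n) (Fin n) ℝ) ⟨i, i.lt_succ_self.trans hi⟩) := by
  ext p q
  simp only [yElem, matUnit, smul_of, Matrix.add_apply, one_apply, Fin.ext_iff, of_apply,
    Pi.smul_apply, smul_eq_mul, mul_ite, mul_one, mul_zero, updateRow_apply, Pi.add_apply]
  grind

theorem totallyNonneg_yElem {n i : ℕ} (hi : i + 1 < n) {a : ℝ} (ha : 0 ≤ a) :
    TotallyNonneg (yElem n i a) := by
  intro k r c hr hc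
  rw [yElem_eq_updateRow hi]
  by_cases hrow : ∃ j, r j = ⟨i + 1, hi⟩
  · obtain ⟨j, hj⟩ := hrow
    have hcov : (⟨i, i.lt_succ_self.trans hi⟩ : Fin n) ⋖ r j := by
      rw [hj]
      exact ⟨Fin.mk_lt_mk.2 i.lt_succ_self, fun x hlt hgt => by
        simp only [Fin.lt_def] at hlt hgt; omega⟩
    rw [← hj, det_submatrix_updateRow_add_smul _ _ _ hr.injective]
    exact add_nonneg (det_one_submatrix_nonneg (R := ℝ) hr.monotone hc)
      (mul_nonneg ha (det_one_submatrix_nonneg (hr.monotone_update_of_covBy hcov) hc))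
  · push Not at hrow
    rw [submatrix_updateRow_of_notMem_range _ _ hrow]
    exact det_one_submatrix_nonneg hr.monotone hc

theorem yElem_totallyNonneg (n : ℕ) :
    (∀ (i : ℕ) (a : ℝ), i + 1 < n → 0 < a → TotallyNonneg (yElem n i a)) ∧
    (∀ (m : ℕ) (idx : Fin m → ℕ) (t : Fin m → ℝ),
      (∀ k, idx k + 1 < n) → (∀ k, 0 < t k) →
      TotallyNonneg (List.ofFn fun k => yElem n (idx k) (t k)).prod) := by
  have hy (i : ℕ) (a : ℝ) (hi : i + 1 < n) (ha : 0 < a) : TotallyNonneg (yElem n i a) :=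
    totallyNonneg_yElem hi ha.le
  refine ⟨hy, fun m idx t hidx ht => ?_⟩
  refine List.prod_induction _ (fun _ _ => TotallyNonneg.mul) TotallyNonneg.one ?_
  simp only [List.mem_ofFn]
  rintro _ ⟨k, rfl⟩
  exact hy _ _ (hidx k) (ht k)
end

section
/- Let (W, S) be a finite Coxeter group, w ∈ W with reduced word w = s_{i_1} ⋯ s_{i_m}, and v ≤ w in Bruhat order. Then there exists a subexpression s_{i_{j_1}} ⋯ s_{i_{j_k}} (with j_1 < ... < j_k) equal to v such that for each l = 0, 1, ..., k we have s_{i_{j_1}} ⋯ s_{i_{j_l}} s_{i_r} > s_{i_{j_1}} ⋯ s_{i_{j_l}} in Bruhat order whenever j_l < r ≤ j_{l+1} (with the conventions j_0 = 0 and j_{k+1} = m). -/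
/-!
The subword products of any two reduced words for `w` coincide: both are the interval below `w`
in the chain form `ChainLE` of the Bruhat order. One inclusion is the strong exchange condition,
proved with Tits' sign cocycle: `W` maps to `(W → ℤˣ) ⋊ W` so that the sign at `t` of the image
of `π ω` is the parity of the number of occurrences of `t` in the left inversion sequence of `ω`.
At a left inversion `t` of `w` this sign is `-1`, so `t` occurs in that sequence for every word
`ω` of `w`; hence the subword products of `ω` are closed under `u ↦ u t` whenever
`ℓ (u t) < ℓ u`, and contain everything chain-below `w`. The other inclusion, for reduced words,
goes by induction on the length together with the lifting property `u ≤ x < x s ⇒ u s ≤ x s`.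

Once `v` is a subword product of `ω = ω' s`, the positive subexpression is built from the right:
the last letter is used iff `v s < v`, and then `v s` (otherwise `v`) is a subword product
of `ω'`.
-/

namespace CoxeterSystem

variable {B : Type*} {W : Type*} [Group W] {M : CoxeterMatrix B}

/-- Bruhat order on a Coxeter group, via the subword property: `v ≤ w` iff some
reduced word for `w` contains a subword whose product is `v`. -/
def BruhatLE (cs : CoxeterSystem M W) (v w : W) : Prop :=
  ∃ ω : List B, cs.IsReduced ω ∧ cs.wordProd ω = w ∧
    ∃ ω' : List B, ω'.Sublist ω ∧ cs.wordProd ω' = v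

/-- Strict Bruhat order. -/
def BruhatLT (cs : CoxeterSystem M W) (v w : W) : Prop :=
  cs.BruhatLE v w ∧ v ≠ w

end CoxeterSystem

open CoxeterSystem

namespace CoxeterSystem

variable {B W : Type*} [Group W] {M : CoxeterMatrix B} (cs : CoxeterSystem M W)

local prefix:100 "π " => cs.wordProd
local prefix:100 "ℓ " => cs.length
local prefix:100 "lis " => cs.leftInvSeq
local prefix:100 "ris " => cs.rightInvSeq

theorem prod_map_alternatingWord_two_mul {G : Type*} [Monoid G] (f : B → G) (i i' : B) (m : ℕ) :
    ((alternatingWord i i' (2 * m)).map f).prod = (f i * f i') ^ m := by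
  induction m with
  | zero => simp [alternatingWord]
  | succ m ih =>
    rw [show 2 * (m + 1) = 2 * m + 1 + 1 by ring, alternatingWord_succ', alternatingWord_succ',
      if_neg (by simp [parity_simps]), if_pos (by simp), List.map_cons, List.map_cons,
      List.prod_cons, List.prod_cons, ih, pow_succ', mul_assoc]

theorem leftInvSeq_alternatingWord_two_mul (i i' : B) (m : ℕ) :
    lis (alternatingWord i i' (2 * m)) =
      (List.range (2 * m)).map fun k => cs.simple i * (cs.simple i' * cs.simple i) ^ k := by
  refine List.ext_getElem (by simp) fun k hk _ => ?_
  rw [getElem_leftInvSeq_alternatingWord _ _ _ _ _ (by simpa using hk),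
    prod_alternatingWord_eq_mul_pow, List.getElem_map, List.getElem_range,
    if_neg (by simp [parity_simps]), show (2 * k + 1) / 2 = k by omega]

noncomputable def conjSignAut : W →* MulAut (W → ℤˣ) :=
  mulAutArrow.comp (ConjAct.toConjAct : W ≃* ConjAct W).toMonoidHom

@[simp]
theorem conjSignAut_apply (w : W) (f : W → ℤˣ) (t : W) :
    conjSignAut w f t = f (w⁻¹ * t * w) := by
  change f ((ConjAct.toConjAct w)⁻¹ • t) = _
  simp [ConjAct.smul_def]

open scoped Classical in
noncomputable def signGen (i : B) : (W → ℤˣ) ⋊[conjSignAut] W :=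
  ⟨fun t => if t = cs.simple i then -1 else 1, cs.simple i⟩

open scoped Classical in
theorem prod_map_signGen (ω : List B) :
    (ω.map cs.signGen).prod = ⟨fun t => (-1) ^ (lis ω).count t, π ω⟩ := by
  induction ω with
  | nil => rfl
  | cons i ω ih =>
    rw [List.map_cons, List.prod_cons, ih]
    refine SemidirectProduct.ext (funext fun t => ?_) (cs.wordProd_cons i ω).symm
    obtain ⟨t, rfl⟩ := (MulAut.conj (cs.simple i)).surjective t
    have hback : (cs.simple i)⁻¹ * MulAut.conj (cs.simple i) t * cs.simple i = t := by
      simp [mul_assoc]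
    have hfix := (MulAut.conj (cs.simple i)).apply_eq_iff_eq (x := t) (y := cs.simple i)
    rw [show MulAut.conj (cs.simple i) (cs.simple i) = cs.simple i by simp] at hfix
    simp only [SemidirectProduct.mul_left, signGen, Pi.mul_apply, conjSignAut_apply, leftInvSeq,
      List.count_cons, List.count_map_of_injective _ _ (MulAut.conj _).injective, hback,
      beq_iff_eq, eq_comm (a := cs.simple i), hfix]
    split_ifs <;> simp [pow_succ, mul_comm]

theorem isLiftable_signGen : M.IsLiftable cs.signGen := by
  classical
  intro i i'
  rw [← prod_map_alternatingWord_two_mul, prod_map_signGen]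
  refine SemidirectProduct.ext (funext fun t => ?_) ?_
  -- the left inversion sequence of the relator runs twice through the same `M i i'` reflections
  · have hperiod : ((fun k => cs.simple i * (cs.simple i' * cs.simple i) ^ k) ∘ (M i i' + ·)) =
        fun k => cs.simple i * (cs.simple i' * cs.simple i) ^ k := by
      funext k
      simp [pow_add]
    rw [leftInvSeq_alternatingWord_two_mul, two_mul, List.range_add, List.map_append,
      List.map_map, hperiod]
    dsimp only
    rw [List.count_append, ← two_mul, pow_mul]
    simp
  · simp [wordProd, prod_map_alternatingWord_two_mul]

noncomputable def signLift : W →* (W → ℤˣ) ⋊[conjSignAut] W :=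
  cs.lift ⟨cs.signGen, cs.isLiftable_signGen⟩

theorem signLift_simple (i : B) : cs.signLift (cs.simple i) = cs.signGen i :=
  cs.lift_apply_simple cs.isLiftable_signGen i

open scoped Classical in
theorem signLift_wordProd (ω : List B) :
    cs.signLift (π ω) = ⟨fun t => (-1) ^ (lis ω).count t, π ω⟩ := by
  rw [← prod_map_signGen, wordProd, map_list_prod, List.map_map]
  congr 2
  funext i
  exact cs.signLift_simple i

@[simp]
theorem signLift_right (w : W) : (cs.signLift w).right = w := by
  obtain ⟨ω, -, rfl⟩ := cs.exists_isReduced w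
  rw [signLift_wordProd]

theorem signLift_left_self {t : W} (ht : cs.IsReflection t) : (cs.signLift t).left t = -1 := by
  classical
  obtain ⟨u, i, rfl⟩ := ht
  set t := u * cs.simple i * u⁻¹ with ht
  have hcore : u⁻¹ * t * u = cs.simple i := by rw [ht]; group
  have h := congrArg (fun g => g.left t) (congrArg cs.signLift (show t * u = u * cs.simple i by
    rw [ht]; group))
  simp only [map_mul, SemidirectProduct.mul_left, Pi.mul_apply, conjSignAut_apply, signLift_right,
    signLift_simple, signGen, hcore, if_true, inv_mul_cancel, one_mul] at h
  rwa [mul_comm, mul_left_cancel_iff] at h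

theorem mem_leftInvSeq_of_isLeftInversion {ω : List B} {t : W}
    (ht : cs.IsLeftInversion (π ω) t) : t ∈ lis ω := by
  classical
  by_contra hω
  obtain ⟨τ, hτ, hτω⟩ := cs.exists_isReduced (t * π ω)
  have hτt : t ∉ lis τ := fun h =>
    (cs.isLeftInversion_of_mem_leftInvSeq hτ h).2.not_ge (by
      rw [← hτω, ← mul_assoc, ht.1.mul_self, one_mul]; exact ht.2.le)
  have hsplit : π ω = t * π τ := by rw [← hτω, ← mul_assoc, ht.1.mul_self, one_mul]
  have hsign := congrArg (fun g => g.left t) (congrArg cs.signLift hsplit)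
  simp only [map_mul, SemidirectProduct.mul_left, Pi.mul_apply, conjSignAut_apply,
    signLift_right, signLift_left_self cs ht.1, signLift_wordProd, List.count_eq_zero.mpr hω,
    inv_mul_cancel, one_mul, List.count_eq_zero.mpr hτt] at hsign
  norm_num at hsign

theorem mem_rightInvSeq_of_isRightInversion {ω : List B} {t : W}
    (ht : cs.IsRightInversion (π ω) t) : t ∈ ris ω := by
  have := cs.mem_leftInvSeq_of_isLeftInversion (ω := ω.reverse)
    (by rwa [wordProd_reverse, isLeftInversion_inv_iff])
  rwa [leftInvSeq_reverse, List.mem_reverse] at this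

theorem exists_wordProd_eraseIdx_eq_mul {ω : List B} {t : W}
    (ht : cs.IsRightInversion (π ω) t) : ∃ j < ω.length, π (ω.eraseIdx j) = π ω * t := by
  obtain ⟨j, hj, rfl⟩ := List.getElem_of_mem (cs.mem_rightInvSeq_of_isRightInversion ht)
  rw [length_rightInvSeq] at hj
  refine ⟨j, hj, ?_⟩
  rw [← wordProd_mul_getD_rightInvSeq, List.getD_eq_getElem]

theorem isReduced_append_singleton_iff {ω : List B} {i : B} :
    cs.IsReduced (ω ++ [i]) ↔ cs.IsReduced ω ∧ ℓ (π ω) < ℓ (π ω * cs.simple i) := by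
  have := cs.length_mul_simple (π ω) i
  have := cs.length_wordProd_le ω
  simp only [IsReduced, wordProd_append, wordProd_singleton, List.length_append,
    List.length_singleton]
  omega

def subwordProds (ω : List B) : Set W := {v | ∃ τ, τ.Sublist ω ∧ π τ = v}

theorem mul_mem_subwordProds {ω : List B} {v t : W} (hv : v ∈ cs.subwordProds ω)
    (ht : cs.IsRightInversion v t) : v * t ∈ cs.subwordProds ω := by
  obtain ⟨τ, hτ, rfl⟩ := hv
  obtain ⟨j, -, hj⟩ := cs.exists_wordProd_eraseIdx_eq_mul ht
  exact ⟨τ.eraseIdx j, (List.eraseIdx_sublist τ j).trans hτ, hj⟩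

theorem mem_subwordProds_append_singleton_iff {ω : List B} {i : B} {v : W} :
    v ∈ cs.subwordProds (ω ++ [i]) ↔
      v ∈ cs.subwordProds ω ∨ v * cs.simple i ∈ cs.subwordProds ω := by
  constructor
  · rintro ⟨τ, hτ, rfl⟩
    obtain ⟨τ, ρ, rfl, hτ', hρ⟩ := List.sublist_append_iff.mp hτ
    rcases List.sublist_singleton.mp hρ with rfl | rfl
    · exact .inl ⟨τ, hτ', by simp⟩
    · exact .inr ⟨τ, hτ', by simp [wordProd_append]⟩
  · rintro (⟨τ, hτ, rfl⟩ | ⟨τ, hτ, hv⟩)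
    · exact ⟨τ, hτ.trans (List.sublist_append_left ω [i]), rfl⟩
    · refine ⟨τ ++ [i], hτ.append (List.Sublist.refl [i]), ?_⟩
      rw [wordProd_append, wordProd_singleton, hv, simple_mul_simple_cancel_right]

theorem mul_simple_mem_subwordProds_append_singleton {ω : List B} {i : B} {v : W}
    (hv : v ∈ cs.subwordProds (ω ++ [i])) : v * cs.simple i ∈ cs.subwordProds (ω ++ [i]) := by
  rw [mem_subwordProds_append_singleton_iff] at hv ⊢
  rw [simple_mul_simple_cancel_right]
  exact hv.symm

theorem mem_subwordProds_of_append_singleton {ω : List B} {i : B} {v : W}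
    (hv : v ∈ cs.subwordProds (ω ++ [i])) (hlt : ℓ v < ℓ (v * cs.simple i)) :
    v ∈ cs.subwordProds ω := by
  rcases cs.mem_subwordProds_append_singleton_iff.mp hv with hv | hv
  · exact hv
  · have := cs.mul_mem_subwordProds hv
      ⟨cs.isReflection_simple i, by rwa [simple_mul_simple_cancel_right]⟩
    rwa [simple_mul_simple_cancel_right] at this

theorem mul_simple_mem_subwordProds_of_append_singleton {ω : List B} {i : B} {v : W}
    (hv : v ∈ cs.subwordProds (ω ++ [i])) (hlt : ℓ (v * cs.simple i) < ℓ v) :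
    v * cs.simple i ∈ cs.subwordProds ω :=
  cs.mem_subwordProds_of_append_singleton (cs.mul_simple_mem_subwordProds_append_singleton hv)
    (by rwa [simple_mul_simple_cancel_right])

def ChainLE : W → W → Prop :=
  Relation.ReflTransGen fun u w => ∃ t, cs.IsRightInversion w t ∧ u = w * t

theorem chainLE_mul {w t : W} (ht : cs.IsRightInversion w t) : cs.ChainLE (w * t) w :=
  .single ⟨t, ht, rfl⟩

theorem chainLE_mul_simple {w : W} {i : B} (h : ℓ w < ℓ (w * cs.simple i)) :
    cs.ChainLE w (w * cs.simple i) := by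
  have := cs.chainLE_mul (w := w * cs.simple i)
    ⟨cs.isReflection_simple i, by rwa [simple_mul_simple_cancel_right]⟩
  rwa [simple_mul_simple_cancel_right] at this

theorem mem_subwordProds_of_chainLE {ω : List B} {v : W} (h : cs.ChainLE v (π ω)) :
    v ∈ cs.subwordProds ω := by
  induction h using Relation.ReflTransGen.head_induction_on with
  | refl => exact ⟨ω, List.Sublist.refl ω, rfl⟩
  | head hstep _ ih =>
    obtain ⟨t, ht, rfl⟩ := hstep
    exact cs.mul_mem_subwordProds ih ht

-- Proved jointly with `chainLE_of_mem_subwordProds`, whose statement for shorter words is `ih`.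
theorem chainLE_mul_simple_of_chainLE {u x : W} {i : B}
    (ih : ∀ ρ : List B, cs.IsReduced ρ → ρ.length < ℓ x →
      ∀ v ∈ cs.subwordProds ρ, cs.ChainLE v (π ρ))
    (hux : cs.ChainLE u x) (hx : ℓ x < ℓ (x * cs.simple i)) :
    cs.ChainLE (u * cs.simple i) (x * cs.simple i) := by
  induction hux with
  | refl => exact .refl
  | @tail y x _ hstep ihy =>
    obtain ⟨t, ht, rfl⟩ := hstep
    have hxs := cs.length_mul_simple x i
    have hys := cs.length_mul_simple (x * t) i
    have hxt := ht.2
    by_cases hy : ℓ (x * t) < ℓ (x * t * cs.simple i)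
    · have hconj : cs.IsReflection (cs.simple i * t * cs.simple i) := by
        simpa using ht.1.conj (cs.simple i)
      refine (ihy (fun ρ hρ hlen => ih ρ hρ (hlen.trans ht.2)) hy).tail
        ⟨cs.simple i * t * cs.simple i, ⟨hconj, ?_⟩, by simp [mul_assoc]⟩
      rw [show x * cs.simple i * (cs.simple i * t * cs.simple i) = x * t * cs.simple i by
        simp [mul_assoc]]
      omega
    · obtain ⟨ρ, hρ, hρy⟩ := cs.exists_isReduced (x * t * cs.simple i)
      have hρi : π (ρ ++ [i]) = x * t := by
        rw [wordProd_append, wordProd_singleton, ← hρy, simple_mul_simple_cancel_right]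
      have hρred : cs.IsReduced (ρ ++ [i]) :=
        cs.isReduced_append_singleton_iff.mpr ⟨hρ, by rw [← hρy, simple_mul_simple_cancel_right]; omega⟩
      have hu : u * cs.simple i ∈ cs.subwordProds (ρ ++ [i]) :=
        cs.mul_simple_mem_subwordProds_append_singleton
          (cs.mem_subwordProds_of_chainLE (hρi ▸ ‹cs.ChainLE u (x * t)›))
      have := ih _ hρred (by rw [hρred.eq.symm, hρi]; exact ht.2) _ hu
      rw [hρi] at this
      exact (this.trans (cs.chainLE_mul ht)).trans (cs.chainLE_mul_simple hx)

theorem chainLE_of_mem_subwordProds {ω : List B} (hω : cs.IsReduced ω) {v : W}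
    (hv : v ∈ cs.subwordProds ω) : cs.ChainLE v (π ω) := by
  induction h : ω.length using Nat.strong_induction_on generalizing ω v with
  | _ n ih =>
  rcases List.eq_nil_or_concat ω with rfl | ⟨ω, i, rfl⟩
  · obtain ⟨τ, hτ, rfl⟩ := hv
    rw [List.sublist_nil.mp hτ]
    exact .refl
  rw [List.concat_eq_append] at hω hv h ⊢
  obtain ⟨hω, hlt⟩ := cs.isReduced_append_singleton_iff.mp hω
  have ih' : ∀ ρ : List B, cs.IsReduced ρ → ρ.length < ℓ (π ω) →
      ∀ v ∈ cs.subwordProds ρ, cs.ChainLE v (π ρ) := fun ρ hρ hlen v hv =>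
    ih ρ.length (by rw [← h, List.length_append, ← hω.eq]; omega) hρ hv rfl
  rw [wordProd_append, wordProd_singleton]
  rcases cs.mem_subwordProds_append_singleton_iff.mp hv with hv | hv
  · exact (ih _ (by simp [← h]) hω hv rfl).trans (cs.chainLE_mul_simple hlt)
  · simpa using cs.chainLE_mul_simple_of_chainLE ih' (ih _ (by simp [← h]) hω hv rfl) hlt

theorem bruhatLT_mul_simple {x : W} {i : B} (h : ℓ x < ℓ (x * cs.simple i)) :
    cs.BruhatLT x (x * cs.simple i) := by
  obtain ⟨ρ, hρ, rfl⟩ := cs.exists_isReduced x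
  refine ⟨⟨ρ ++ [i], cs.isReduced_append_singleton_iff.mpr ⟨hρ, h⟩,
    by rw [wordProd_append, wordProd_singleton], ρ, List.sublist_append_left ρ [i], rfl⟩,
    fun he => h.ne (congrArg cs.length he)⟩

section Subexpression

variable {k m : ℕ}

def snocLast (j : Fin k → Fin m) : Fin (k + 1) → Fin (m + 1) :=
  Fin.snoc (α := fun _ => Fin (m + 1)) (Fin.castSucc ∘ j) (Fin.last m)

@[simp]
theorem snocLast_castSucc (j : Fin k → Fin m) (t : Fin k) :
    snocLast j t.castSucc = (j t).castSucc :=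
  Fin.snoc_castSucc (α := fun _ => Fin (m + 1)) _ _ t

@[simp]
theorem snocLast_last (j : Fin k → Fin m) : snocLast j (Fin.last k) = Fin.last m :=
  Fin.snoc_last (α := fun _ => Fin (m + 1)) _ _

theorem strictMono_snocLast {j : Fin k → Fin m} (hj : StrictMono j) : StrictMono (snocLast j) := by
  intro a b hab
  induction b using Fin.lastCases with
  | last =>
    induction a using Fin.lastCases with
    | last => exact absurd hab (lt_irrefl _)
    | cast a => simp [Fin.castSucc_lt_last]
  | cast b =>
    induction a using Fin.lastCases with
    | last => exact absurd hab (not_lt.2 (Fin.le_last _))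
    | cast a => simpa using hj (Fin.castSucc_lt_castSucc_iff.mp hab)

def prefixWord (a : Fin m → B) (j : Fin k → Fin m) (r : ℕ) : List B :=
  (List.ofFn fun t => a (j t)).take (Finset.univ.filter fun t => (j t : ℕ) < r).card

theorem prefixWord_eq_ofFn (a : Fin m → B) (j : Fin k → Fin m) {r : ℕ}
    (h : ∀ t, (j t : ℕ) < r) : prefixWord a j r = List.ofFn fun t => a (j t) := by
  rw [prefixWord, Finset.filter_true_of_mem fun t _ => h t, Finset.card_univ, Fintype.card_fin]
  exact List.take_of_length_le (by simp)

theorem prefixWord_snocLast (a : Fin (m + 1) → B) (j : Fin k → Fin m) {r : ℕ} (hr : r ≤ m) :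
    prefixWord a (snocLast j) r = prefixWord (Fin.init a) j r := by
  have hcard : (Finset.univ.filter fun t => (snocLast j t : ℕ) < r).card =
      (Finset.univ.filter fun t => (j t : ℕ) < r).card := by
    rw [Finset.card_filter, Finset.card_filter, Fin.sum_univ_castSucc]
    simp [hr.not_gt]
  rw [prefixWord, prefixWord, hcard, List.ofFn_succ', List.concat_eq_append,
    List.take_append_of_le_length ((Finset.card_filter_le _ _).trans (by simp))]
  simp [Fin.init]

theorem ofFn_snocLast (a : Fin (m + 1) → B) (j : Fin k → Fin m) :
    (List.ofFn fun t => a (snocLast j t)) =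
      (List.ofFn fun t => Fin.init a (j t)) ++ [a (Fin.last m)] := by
  rw [List.ofFn_succ', List.concat_eq_append]
  simp [Fin.init]

end Subexpression

theorem exists_positive_subexpression_ofFn {m : ℕ} (a : Fin m → B) {v : W}
    (hv : v ∈ cs.subwordProds (List.ofFn a)) :
    ∃ (k : ℕ) (j : Fin k → Fin m), StrictMono j ∧ cs.IsReduced (List.ofFn fun t => a (j t)) ∧
      π (List.ofFn fun t => a (j t)) = v ∧
      ∀ r : Fin m, ℓ (π (prefixWord a j r)) < ℓ (π (prefixWord a j r) * cs.simple (a r)) := by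
  induction m generalizing v with
  | zero =>
    obtain ⟨τ, hτ, rfl⟩ := hv
    rw [List.ofFn_zero, List.sublist_nil] at hτ
    subst hτ
    exact ⟨0, finZeroElim, fun t => t.elim0, by simp [IsReduced], rfl, finZeroElim⟩
  | succ m ih =>
    rw [List.ofFn_succ', List.concat_eq_append] at hv
    by_cases hlt : ℓ (v * cs.simple (a (Fin.last m))) < ℓ v
    · obtain ⟨k, j, hj, hred, hprod, hpos⟩ :=
        ih (Fin.init a) (cs.mul_simple_mem_subwordProds_of_append_singleton hv hlt)
      refine ⟨k + 1, snocLast j, strictMono_snocLast hj, ?_, ?_, fun r => ?_⟩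
      · rw [ofFn_snocLast, isReduced_append_singleton_iff, hprod, simple_mul_simple_cancel_right]
        exact ⟨hred, hlt⟩
      · rw [ofFn_snocLast, wordProd_append, wordProd_singleton, hprod,
          simple_mul_simple_cancel_right]
      · induction r using Fin.lastCases with
        | last =>
          rw [prefixWord_snocLast _ _ (by simp), prefixWord_eq_ofFn _ _ (by simp), hprod,
            simple_mul_simple_cancel_right]
          exact hlt
        | cast r =>
          rw [Fin.val_castSucc, prefixWord_snocLast _ _ r.isLt.le]
          exact hpos r
    · have hgt : ℓ v < ℓ (v * cs.simple (a (Fin.last m))) := by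
        have := cs.length_mul_simple v (a (Fin.last m))
        omega
      obtain ⟨k, j, hj, hred, hprod, hpos⟩ :=
        ih (Fin.init a) (cs.mem_subwordProds_of_append_singleton hv hgt)
      refine ⟨k, Fin.castSucc ∘ j, Fin.strictMono_castSucc.comp hj, hred, hprod, fun r => ?_⟩
      induction r using Fin.lastCases with
      | last =>
        have hfull : prefixWord a (Fin.castSucc ∘ j) (Fin.last m) =
            List.ofFn fun t => Fin.init a (j t) := prefixWord_eq_ofFn _ _ (by simp)
        rw [hfull, hprod]
        exact hgt
      | cast r => exact hpos r

end CoxeterSystem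

theorem exists_positive_subexpression_general {B W : Type*} [Group W]
    {M : CoxeterMatrix B} (cs : CoxeterSystem M W)
    (ω : List B) (w v : W) (hw : cs.wordProd ω = w)
    (hvw : cs.BruhatLE v w) :
    ∃ (k : ℕ) (j : Fin k → Fin ω.length), StrictMono j ∧
      cs.IsReduced (List.ofFn fun t => ω.get (j t)) ∧
      cs.wordProd (List.ofFn fun t => ω.get (j t)) = v ∧
      ∀ r : Fin ω.length,
        cs.BruhatLT
          (cs.wordProd ((List.ofFn fun t => ω.get (j t)).take
            ((Finset.univ.filter fun t => (j t : ℕ) < (r : ℕ)).card)))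
          (cs.wordProd ((List.ofFn fun t => ω.get (j t)).take
            ((Finset.univ.filter fun t => (j t : ℕ) < (r : ℕ)).card)) *
              cs.simple (ω.get r)) := by
  obtain ⟨ω', hω', rfl, hv⟩ := hvw
  have hv : v ∈ cs.subwordProds (List.ofFn ω.get) := by
    rw [List.ofFn_get]
    exact cs.mem_subwordProds_of_chainLE (hw ▸ cs.chainLE_of_mem_subwordProds hω' hv)
  obtain ⟨k, j, hj, hred, hprod, hpos⟩ := cs.exists_positive_subexpression_ofFn ω.get hv
  exact ⟨k, j, hj, hred, hprod, fun r => cs.bruhatLT_mul_simple (hpos r)⟩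

/-- Existence of the positive (rightmost reduced) subexpression of Marsh–Rietsch:
given a reduced word `ω = (i₁, …, i_m)` for `w` and `v ≤ w` in Bruhat order, there is
a subexpression `s_{i_{j₁}} ⋯ s_{i_{j_k}}` (with `j₁ < ⋯ < j_k`) which is a reduced
word for `v` such that for each position `r` of `ω`, letting `l = #{t : j_t < r}`,
we have `s_{i_{j₁}} ⋯ s_{i_{j_l}} · s_{i_r} > s_{i_{j₁}} ⋯ s_{i_{j_l}}` in Bruhat
order (this is exactly the condition for `j_l < r ≤ j_{l+1}`, `l = 0, …, k`, with the
conventions `j₀ = 0`, `j_{k+1} = m`). -/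
theorem exists_positive_subexpression {B W : Type*} [Group W] [Finite W]
    {M : CoxeterMatrix B} (cs : CoxeterSystem M W)
    (ω : List B) (hred : cs.IsReduced ω) (w v : W) (hw : cs.wordProd ω = w)
    (hvw : cs.BruhatLE v w) :
    ∃ (k : ℕ) (j : Fin k → Fin ω.length), StrictMono j ∧
      cs.IsReduced (List.ofFn fun t => ω.get (j t)) ∧
      cs.wordProd (List.ofFn fun t => ω.get (j t)) = v ∧
      ∀ r : Fin ω.length,
        cs.BruhatLT
          (cs.wordProd ((List.ofFn fun t => ω.get (j t)).take
            ((Finset.univ.filter fun t => (j t : ℕ) < (r : ℕ)).card)))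
          (cs.wordProd ((List.ofFn fun t => ω.get (j t)).take
            ((Finset.univ.filter fun t => (j t : ℕ) < (r : ℕ)).card)) *
              cs.simple (ω.get r)) :=
  exists_positive_subexpression_general cs ω w v hw hvw
end
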